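/- Let h : ℝ⁶ → ℝ be continuously differentiable, define H : ℂ⁴ → ℝ by H(z) := h(|z₁|², |z₂|², |z₃|², |z₄|², Re(z₁² conj(z₃)), Re(z₂² conj(z₄))), and let X_H : ℂ⁴ → ℂ⁴ be the Hamiltonian vector field of H with respect to the symplectic form ω(u, v) := 2 Σ_{j=1}^{4} Im(u_j · conj(v_j)), i.e. ω(X_H(z), v) = DH(z)·v for all v. Then for every C ∈ ℝ, writing a₃ := ∂₃h(0, 0, C², 0, 0, 0), the curve γ(t) := (0, 0, C e^{i a₃ t}, 0) is an integral curve of X_H: γ′(t) = X_H(γ(t)) for all t ∈ ℝ. (This is the family RE_I of periodic relative equilibria through (0, 0, C, 0).) -/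

import Mathlib

/-! At `x = (0, 0, c, 0)` every invariant other than `X₃ = |z₃|²` is stationary: it is quadratic
in coordinates vanishing at `x`, or carries a factor `z₁²` or `z₂²`. Hence
`DH(x) v = 2 a₃ Re(conj c · v₃)`, which is also `ω((0, 0, i a₃ c, 0), v)`. By nondegeneracy of `ω`,
`X_H(x) = (0, 0, i a₃ c, 0)`, and this is the velocity of `γ` when `γ(t) = x`. -/

open Complex ContinuousLinearMap

section

variable {ι : Type*} [Fintype ι]

theorem hasFDerivAt_normSq_apply (z : ι → ℂ) (j : ι) :
    HasFDerivAt (fun z : ι → ℂ => normSq (z j))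
      ((2 : ℝ) • reCLM.comp ((starRingEnd ℂ) (z j) • proj j)) z := by
  have h := (hasFDerivAt_apply (𝕜 := ℝ) j z).norm_sq
  simp only [← normSq_eq_norm_sq] at h
  refine h.congr_fderiv ?_
  ext v
  simp [Complex.inner, mul_comm ((starRingEnd ℂ) _), mul_add]

theorem hasFDerivAt_re_sq_mul_conj_apply_of_eq_zero {z : ι → ℂ} {j : ι}
    (hz : z j = 0) (k : ι) :
    HasFDerivAt (fun z : ι → ℂ => ((z j) ^ 2 * (starRingEnd ℂ) (z k)).re)
      (0 : (ι → ℂ) →L[ℝ] ℝ) z := by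
  have hconj : HasFDerivAt (fun z : ι → ℂ => (starRingEnd ℂ) (z k)) _ z :=
    (hasFDerivAt_apply (𝕜 := ℝ) k z).star
  have h := reCLM.hasFDerivAt.comp z (((hasFDerivAt_apply (𝕜 := ℝ) j z).pow 2).mul hconj)
  refine h.congr_fderiv ?_
  ext v; simp [hz]

def symplecticForm (u v : ι → ℂ) : ℝ :=
  2 * ∑ j, (u j * (starRingEnd ℂ) (v j)).im

theorem symplecticForm_single_right [DecidableEq ι] (u : ι → ℂ) (j : ι) (a : ℂ) :
    symplecticForm u (Pi.single j a) = 2 * (u j * (starRingEnd ℂ) a).im := by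
  rw [symplecticForm, Fintype.sum_eq_single j fun k hk => by simp [hk]]
  simp

theorem symplecticForm_left_injective {u w : ι → ℂ}
    (h : ∀ v, symplecticForm u v = symplecticForm w v) : u = w := by
  classical
  funext j
  apply Complex.ext
  · simpa [symplecticForm_single_right] using h (Pi.single j I)
  · simpa [symplecticForm_single_right] using h (Pi.single j 1)

end

def invariantMap (z : Fin 4 → ℂ) : Fin 6 → ℝ :=
  ![normSq (z 0), normSq (z 1), normSq (z 2), normSq (z 3),
    ((z 0) ^ 2 * (starRingEnd ℂ) (z 2)).re, ((z 1) ^ 2 * (starRingEnd ℂ) (z 3)).re]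

theorem invariantMap_axis (c : ℂ) : invariantMap ![0, 0, c, 0] = ![0, 0, normSq c, 0, 0, 0] := by
  funext i; fin_cases i <;> simp [invariantMap]

theorem hasFDerivAt_invariantMap_axis (c : ℂ) :
    HasFDerivAt invariantMap
      (((2 : ℝ) • reCLM.comp ((starRingEnd ℂ) c • proj 2)).smulRight (Pi.single 2 1))
      ![0, 0, c, 0] := by
  rw [hasFDerivAt_pi']
  intro i
  fin_cases i
  · exact (hasFDerivAt_normSq_apply _ 0).congr_fderiv (by ext; simp)
  · exact (hasFDerivAt_normSq_apply _ 1).congr_fderiv (by ext; simp)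
  · exact (hasFDerivAt_normSq_apply _ 2).congr_fderiv (by ext; simp)
  · exact (hasFDerivAt_normSq_apply _ 3).congr_fderiv (by ext; simp)
  · exact (hasFDerivAt_re_sq_mul_conj_apply_of_eq_zero (j := (0 : Fin 4)) rfl 2).congr_fderiv
      (by ext; simp)
  · exact (hasFDerivAt_re_sq_mul_conj_apply_of_eq_zero (j := (1 : Fin 4)) rfl 3).congr_fderiv
      (by ext; simp)

theorem fderiv_comp_invariantMap_axis {h : (Fin 6 → ℝ) → ℝ} {c : ℂ}
    (hh : DifferentiableAt ℝ h ![0, 0, normSq c, 0, 0, 0]) (v : Fin 4 → ℂ) :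
    fderiv ℝ (h ∘ invariantMap) ![0, 0, c, 0] v =
      2 * ((starRingEnd ℂ) c * v 2).re * fderiv ℝ h ![0, 0, normSq c, 0, 0, 0] (Pi.single 2 1) := by
  rw [← invariantMap_axis] at hh
  rw [(hh.hasFDerivAt.comp _ (hasFDerivAt_invariantMap_axis c)).fderiv, invariantMap_axis]
  simp [smulRight_apply, map_smul]

theorem symplecticForm_axis_rotation (a : ℝ) (c : ℂ) (v : Fin 4 → ℂ) :
    symplecticForm ![0, 0, I * a * c, 0] v = 2 * ((starRingEnd ℂ) c * v 2).re * a := by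
  simp only [symplecticForm, Fin.sum_univ_four, Matrix.cons_val_zero, Matrix.cons_val_one,
    Matrix.cons_val, zero_mul, zero_re, zero_im, mul_im, mul_re, conj_re, conj_im, I_re, I_im,
    ofReal_re, ofReal_im]
  ring

theorem hasDerivAt_axis_rotation (c : ℂ) (a t : ℝ) :
    HasDerivAt (fun s : ℝ => (![0, 0, c * exp (I * a * s), 0] : Fin 4 → ℂ))
      ![0, 0, I * a * (c * exp (I * a * t)), 0] t := by
  rw [hasDerivAt_pi]
  intro i
  fin_cases i
  · exact hasDerivAt_const _ _
  · exact hasDerivAt_const _ _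
  · show HasDerivAt _ (I * a * (c * exp (I * a * t))) t
    have hlin : HasDerivAt (fun s : ℝ => I * a * (s : ℂ)) (I * a) t := by
      simpa using (ofRealCLM.hasDerivAt (x := t)).const_mul (I * a)
    exact (hlin.cexp.const_mul c).congr_deriv (by ring)
  · exact hasDerivAt_const _ _

theorem normSq_ofReal_mul_exp_I_mul (C a t : ℝ) : normSq (C * exp (I * a * t)) = C ^ 2 := by
  have hexp : I * a * t = ((a * t : ℝ) : ℂ) * I := by push_cast; ring
  rw [normSq_mul, normSq_ofReal, normSq_eq_norm_sq (exp _), hexp, norm_exp_ofReal_mul_I]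
  ring

/-- The curve `γ(t) = (0, 0, C e^{i a₃ t}, 0)`, with
`a₃ = ∂₃h(0,0,C²,0,0,0)`, is an integral curve of the Hamiltonian vector field `X_H` of the
invariant Hamiltonian `H` with respect to `ω(u,v) = 2 Σ Im(u_j conj(v_j))` (the family `RE_I`
of periodic relative equilibria through `(0,0,C,0)`). -/
theorem stmt_16 (h : (Fin 6 → ℝ) → ℝ) (hC1 : ContDiff ℝ 1 h) (C : ℝ)
    (XH : (Fin 4 → ℂ) → Fin 4 → ℂ)
    (hXH : ∀ z v : Fin 4 → ℂ,
      (2 : ℝ) * ∑ j : Fin 4, (XH z j * (starRingEnd ℂ) (v j)).im =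
        fderiv ℝ (fun z : Fin 4 → ℂ =>
          h ![Complex.normSq (z 0), Complex.normSq (z 1), Complex.normSq (z 2),
              Complex.normSq (z 3), ((z 0) ^ 2 * (starRingEnd ℂ) (z 2)).re,
              ((z 1) ^ 2 * (starRingEnd ℂ) (z 3)).re]) z v)
    (a₃ : ℝ)
    (ha₃ : a₃ = fderiv ℝ h ![0, 0, C ^ 2, 0, 0, 0] (Pi.single (2 : Fin 6) (1 : ℝ))) :
    ∀ t : ℝ, HasDerivAt
      (fun s : ℝ =>
        (![0, 0, (C : ℂ) * Complex.exp (Complex.I * (a₃ : ℂ) * (s : ℂ)), 0] : Fin 4 → ℂ))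
      (XH ![0, 0, (C : ℂ) * Complex.exp (Complex.I * (a₃ : ℂ) * (t : ℂ)), 0]) t := by
  intro t
  set c : ℂ := C * exp (I * a₃ * t)
  have hc : normSq c = C ^ 2 := normSq_ofReal_mul_exp_I_mul C a₃ t
  have hh : DifferentiableAt ℝ h ![0, 0, normSq c, 0, 0, 0] := hC1.differentiable one_ne_zero _
  have hXc : XH ![0, 0, c, 0] = ![0, 0, I * a₃ * c, 0] := by
    refine symplecticForm_left_injective fun v => (hXH _ v).trans ?_
    rw [symplecticForm_axis_rotation, ha₃, ← hc]
    exact fderiv_comp_invariantMap_axis hh v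
  rw [hXc]
  exact hasDerivAt_axis_rotation C a₃ t
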